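/- Let A be an MVW-rig and I an ideal of A. The map J ↦ f(J) = { [a]_I : a ∈ J }, where f : A → A/I is the natural quotient homomorphism, is an inclusion-preserving bijection between the ideals of A containing I and the ideals of the quotient MVW-rig A/I; moreover the direct image under f of an ideal containing I is an ideal of A/I, and the inverse image of an ideal of A/I is an ideal of A containing I. -/

import Mathlib

/-- An MV-algebra `(A, ⊕, ¬, 0)`. -/
class MValg (A : Type*) where
  add : A → A → A
  neg : A → A
  zero : A
  add_assoc : ∀ x y z : A, add x (add y z) = add (add x y) z
  add_comm : ∀ x y : A, add x y = add y x
  add_zero : ∀ x : A, add x zero = x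
  add_neg_zero : ∀ x : A, add x (neg zero) = neg zero
  neg_neg : ∀ x : A, neg (neg x) = x
  mv6 : ∀ x y : A, add (neg (add (neg x) y)) y = add (neg (add (neg y) x)) x

namespace MValg

variable {A : Type*} [MValg A]

/-- Truncated difference `x ⊖ y = ¬(¬x ⊕ y)`. -/
def sub (x y : A) : A := neg (add (neg x) y)

/-- The natural MV-order: `x ≤ y` iff `x ⊖ y = 0`. -/
def le (x y : A) : Prop := sub x y = zero

/-- Join: `x ∨ y = (x ⊖ y) ⊕ y`. -/
def sup (x y : A) : A := add (sub x y) y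

/-- Meet: `x ∧ y = ¬(¬x ∨ ¬y)`. -/
def inf (x y : A) : A := neg (sup (neg x) (neg y))

end MValg

/-- An MVW-rig: an MV-algebra with an associative product interacting with ⊕ and ⊖. -/
class MVWrig (A : Type*) extends MValg A where
  mul : A → A → A
  mul_assoc : ∀ a b c : A, mul (mul a b) c = mul a (mul b c)
  mul_zero : ∀ a : A, mul a zero = zero
  zero_mul : ∀ a : A, mul zero a = zero
  mul_add_le : ∀ a b c : A, MValg.le (mul a (MValg.add b c)) (MValg.add (mul a b) (mul a c))
  add_mul_le : ∀ a b c : A, MValg.le (mul (MValg.add b c) a) (MValg.add (mul b a) (mul c a))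
  mul_sub_ge : ∀ a b c : A, MValg.le (MValg.sub (mul a b) (mul a c)) (mul a (MValg.sub b c))
  sub_mul_ge : ∀ a b c : A, MValg.le (MValg.sub (mul b a) (mul c a)) (mul (MValg.sub b c) a)

namespace MVWrig

variable {A : Type*} [MVWrig A]

/-- `pow a n` is the `(n+1)`-fold product `a^(n+1) = a·a⋯a`; exponents `n : ℕ` here
correspond exactly to the exponents `n + 1 ≥ 1` ("n-fold products") of the paper. -/
def pow (a : A) : ℕ → A
  | 0 => a
  | n + 1 => mul (pow a n) a

/-- Ideals of an MVW-rig: contain 0, downward closed, closed under ⊕,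
and absorbing for the product on both sides. -/
def IsIdeal (I : Set A) : Prop :=
  MValg.zero ∈ I ∧
  (∀ a b : A, MValg.le a b → b ∈ I → a ∈ I) ∧
  (∀ a b : A, a ∈ I → b ∈ I → MValg.add a b ∈ I) ∧
  (∀ a b : A, a ∈ I → mul a b ∈ I ∧ mul b a ∈ I)

/-- Prime ideals: `ab ∈ P` implies `a ∈ P` or `b ∈ P`. -/
def IsPrimeIdeal (P : Set A) : Prop :=
  IsIdeal P ∧ ∀ a b : A, mul a b ∈ P → a ∈ P ∨ b ∈ P

/-- The ideal generated by a set: the smallest ideal containing it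
(the intersection of all ideals containing it). -/
def genIdeal (S : Set A) : Set A := ⋂₀ {I : Set A | IsIdeal I ∧ S ⊆ I}

/-- The congruence relation associated to an ideal `I`:
`x ≡_I y` iff `(x ⊖ y) ⊕ (y ⊖ x) ∈ I`. -/
def relI (I : Set A) (x y : A) : Prop :=
  MValg.add (MValg.sub x y) (MValg.sub y x) ∈ I

/-- A congruence on an MVW-rig: an equivalence relation compatible with ⊕, ¬ and ·. -/
def IsCongruence (r : A → A → Prop) : Prop :=
  Equivalence r ∧
  (∀ a b c d : A, r a b → r c d → r (MValg.add a c) (MValg.add b d)) ∧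
  (∀ a b : A, r a b → r (MValg.neg a) (MValg.neg b)) ∧
  (∀ a b c d : A, r a b → r c d → r (mul a c) (mul b d))

/-- Homomorphisms of MVW-rigs. -/
def IsHom {A B : Type*} [MVWrig A] [MVWrig B] (f : A → B) : Prop :=
  f MValg.zero = MValg.zero ∧
  (∀ x y : A, f (MValg.add x y) = MValg.add (f x) (f y)) ∧
  (∀ x : A, f (MValg.neg x) = MValg.neg (f x)) ∧
  (∀ x y : A, f (mul x y) = mul (f x) (f y))

end MVWrig

namespace MVWrig

variable {A : Type*} [MVWrig A]

/-- The natural quotient map `A → A/I` onto the classes of the congruence `≡_I`. -/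
def quotMk (I : Set A) : A → Quot (relI I) := Quot.mk _

/-- A subset `S` of the quotient `A/I` is an ideal of the quotient MVW-rig:
written out on representatives via the quotient operations
`[x]⊕[y] = [x⊕y]`, `[x][y] = [xy]` and the quotient order `[a] ≤ [b] ↔ [a⊖b] = [0]`. -/
def IsQuotIdeal (I : Set A) (S : Set (Quot (relI I))) : Prop :=
  quotMk I MValg.zero ∈ S ∧
  (∀ a b : A, quotMk I (MValg.sub a b) = quotMk I MValg.zero →
    quotMk I b ∈ S → quotMk I a ∈ S) ∧
  (∀ a b : A, quotMk I a ∈ S → quotMk I b ∈ S → quotMk I (MValg.add a b) ∈ S) ∧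
  (∀ a b : A, quotMk I a ∈ S → quotMk I (mul a b) ∈ S ∧ quotMk I (mul b a) ∈ S)

end MVWrig

namespace MValg
variable {A : Type*} [MValg A]

lemma zadd (x : A) : add zero x = x := by rw [add_comm]; exact add_zero x

lemma nadd_self (x : A) : add (neg x) x = neg zero := by
  have h := mv6 x (neg zero)
  rw [add_neg_zero, neg_neg, zadd] at h
  exact h.symm

lemma sub_self' (x : A) : sub x x = zero := by
  rw [sub, nadd_self, neg_neg]

lemma le_of_eq_add {x y z : A} (h : add x z = y) : le x y := by
  rw [le, sub, ← h, add_assoc, nadd_self, add_comm, add_neg_zero, neg_neg]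

lemma exists_of_le {x y : A} (h : le x y) : ∃ z : A, add x z = y := by
  refine ⟨sub y x, ?_⟩
  have h6 := mv6 x y
  rw [le, sub] at h
  rw [h, zadd] at h6
  rw [add_comm, sub]
  exact h6.symm

lemma le_iff_ex {x y : A} : le x y ↔ ∃ z : A, add x z = y :=
  ⟨exists_of_le, fun ⟨_, h⟩ => le_of_eq_add h⟩

lemma le_refl' (x : A) : le x x := le_of_eq_add (add_zero x)

lemma le_trans' {x y z : A} (h1 : le x y) (h2 : le y z) : le x z := by
  obtain ⟨a, ha⟩ := exists_of_le h1
  obtain ⟨b, hb⟩ := exists_of_le h2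
  exact le_of_eq_add (by rw [add_assoc, ha, hb])

lemma le_add_right' (x z : A) : le x (add x z) := le_of_eq_add rfl

lemma le_add_left' (x z : A) : le x (add z x) := le_of_eq_add (add_comm x z)

lemma zero_le' (x : A) : le zero x := le_of_eq_add (zadd x)

lemma le_sup' (a b : A) : le a (add (sub a b) b) := by
  have h6 := mv6 a b
  rw [show (neg (add (neg a) b)) = sub a b from rfl, show (neg (add (neg b) a)) = sub b a from rfl] at h6
  rw [h6, add_comm]
  exact le_add_right' a (sub b a)

lemma sub_neg_neg' (a b : A) : sub (neg b) (neg a) = sub a b := by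
  rw [sub, sub, neg_neg, add_comm]

lemma le_neg' {a b : A} (h : le a b) : le (neg b) (neg a) := by
  rw [le, sub_neg_neg']; exact h

lemma add_le_add_left' {a b : A} (h : le a b) (c : A) : le (add c a) (add c b) := by
  obtain ⟨z, hz⟩ := exists_of_le h
  exact le_of_eq_add (by rw [← add_assoc, hz])

lemma add_le_add' {a b c d : A} (h1 : le a b) (h2 : le c d) :
    le (add a c) (add b d) := by
  have hac : le (add c a) (add c b) := add_le_add_left' h1 c
  rw [add_comm c a, add_comm c b] at hac
  exact le_trans' hac (add_le_add_left' h2 b)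

lemma le_of_neg_le {a b : A} (h : le (neg a) (neg b)) : le b a := by
  have := le_neg' h
  rwa [neg_neg, neg_neg] at this

lemma add_sub_cancel_le' (w z : A) : le (sub (add w z) z) w := by
  apply le_of_neg_le
  have : neg (sub (add w z) z) = add (sub (neg w) z) z := by
    rw [sub, neg_neg, sub, neg_neg]
  rw [this]
  exact le_sup' (neg w) z

lemma sub_le_sub_left' {x y : A} (h : le x y) (c : A) : le (sub x c) (sub y c) := by
  obtain ⟨z, hz⟩ := exists_of_le (le_neg' h)
  apply le_of_neg_le
  rw [sub, sub, neg_neg, neg_neg, ← hz, ← add_assoc, add_comm z c, add_assoc]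
  exact le_add_right' (add (neg y) c) z

lemma add_sub_le' (x y c : A) : le (sub (add x y) c) (add x (sub y c)) := by
  have h2 : le (add x y) (add (add x (sub y c)) c) := by
    rw [← add_assoc]
    exact add_le_add_left' (le_sup' y c) x
  exact le_trans' (sub_le_sub_left' h2 c) (add_sub_cancel_le' _ _)

lemma triangle' (a b c : A) : le (sub a c) (add (sub a b) (sub b c)) :=
  le_trans' (sub_le_sub_left' (le_sup' a b) c) (add_sub_le' _ _ _)

lemma sub_zero' (x : A) : sub x zero = x := by rw [sub, add_zero, neg_neg]

lemma zero_sub' (x : A) : sub zero x = zero := by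
  rw [sub, add_comm, add_neg_zero, neg_neg]

end MValg

namespace MVWrig
open MValg
variable {A : Type*} [MVWrig A] {I : Set A}

lemma relI_refl (hI : IsIdeal I) (a : A) : relI I a a := by
  unfold relI
  rw [sub_self', MValg.add_zero]
  exact hI.1

lemma relI_symm {a b : A} (h : relI I a b) : relI I b a := by
  unfold relI at *
  rwa [MValg.add_comm]

lemma relI_trans (hI : IsIdeal I) {a b c : A} (h1 : relI I a b) (h2 : relI I b c) :
    relI I a c := by
  unfold relI at *
  have m1 : sub a b ∈ I := hI.2.1 _ _ (le_add_right' _ _) h1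
  have m2 : sub b a ∈ I := hI.2.1 _ _ (le_add_left' _ _) h1
  have m3 : sub b c ∈ I := hI.2.1 _ _ (le_add_right' _ _) h2
  have m4 : sub c b ∈ I := hI.2.1 _ _ (le_add_left' _ _) h2
  have big : add (add (sub a b) (sub b c)) (add (sub c b) (sub b a)) ∈ I :=
    hI.2.2.1 _ _ (hI.2.2.1 _ _ m1 m3) (hI.2.2.1 _ _ m4 m2)
  exact hI.2.1 _ _ (add_le_add' (triangle' a b c) (triangle' c b a)) big

lemma relI_equiv (hI : IsIdeal I) : Equivalence (relI I) :=
  ⟨relI_refl hI, relI_symm, relI_trans hI⟩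

lemma quot_eq_iff (hI : IsIdeal I) {a b : A} :
    quotMk I a = quotMk I b ↔ relI I a b := by
  rw [quotMk, Quot.eq]
  exact (relI_equiv hI).eqvGen_iff

lemma sub_mem_of_relI (hI : IsIdeal I) {a b : A} (h : relI I a b) : sub a b ∈ I :=
  hI.2.1 _ _ (le_add_right' _ _) h

lemma relI_zero_iff {a : A} : relI I a zero ↔ a ∈ I := by
  unfold relI
  rw [sub_zero', zero_sub', MValg.add_zero]

/-- Key: for an ideal `J ⊇ I`, membership in the image is detected on representatives. -/
lemma mem_image_iff (hI : IsIdeal I) {J : Set A} (hJ : IsIdeal J) (hIJ : I ⊆ J) {a : A} :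
    quotMk I a ∈ quotMk I '' J ↔ a ∈ J := by
  constructor
  · rintro ⟨j, hj, heq⟩
    have hrel : relI I a j := relI_symm ((quot_eq_iff hI).1 heq)
    have hsub : sub a j ∈ J := hIJ (sub_mem_of_relI hI hrel)
    exact hJ.2.1 _ _ (le_sup' a j) (hJ.2.2.1 _ _ hsub hj)
  · exact fun h => ⟨a, h, rfl⟩

end MVWrig

open MVWrig in
/-- For an ideal `I` of an MVW-rig `A`, with `f : A → A/I` the natural quotient map,
`J ↦ f(J)` is an inclusion-preserving bijection between the ideals of `A` containing
`I` and the ideals of the quotient MVW-rig `A/I`; direct images of ideals containing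
`I` are ideals of `A/I`, and inverse images of ideals of `A/I` are ideals of `A`
containing `I`. -/
theorem stmt_7 {A : Type*} [MVWrig A] (I : Set A) (hI : IsIdeal I) :
    (∀ J : Set A, IsIdeal J → I ⊆ J → IsQuotIdeal I (quotMk I '' J)) ∧
    (∀ S : Set (Quot (relI I)), IsQuotIdeal I S →
      IsIdeal (quotMk I ⁻¹' S) ∧ I ⊆ quotMk I ⁻¹' S) ∧
    Set.BijOn (fun J : Set A => quotMk I '' J)
      {J : Set A | IsIdeal J ∧ I ⊆ J} {S : Set (Quot (relI I)) | IsQuotIdeal I S} ∧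
    (∀ J K : Set A, IsIdeal J → I ⊆ J → IsIdeal K → I ⊆ K →
      (J ⊆ K ↔ quotMk I '' J ⊆ quotMk I '' K)) := by

  have part1 : ∀ J : Set A, IsIdeal J → I ⊆ J → IsQuotIdeal I (quotMk I '' J) := by
    intro J hJ hIJ
    refine ⟨⟨MValg.zero, hJ.1, rfl⟩, ?_, ?_, ?_⟩
    · intro a b hsub hb
      rw [mem_image_iff hI hJ hIJ] at hb ⊢
      have hs : MValg.sub a b ∈ J := hIJ (relI_zero_iff.1 ((quot_eq_iff hI).1 hsub))
      exact hJ.2.1 _ _ (MValg.le_sup' a b) (hJ.2.2.1 _ _ hs hb)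
    · intro a b ha hb
      rw [mem_image_iff hI hJ hIJ] at ha hb ⊢
      exact hJ.2.2.1 _ _ ha hb
    · intro a b ha
      rw [mem_image_iff hI hJ hIJ] at ha
      rw [mem_image_iff hI hJ hIJ, mem_image_iff hI hJ hIJ]
      exact hJ.2.2.2 a b ha
  have part2 : ∀ S : Set (Quot (relI I)), IsQuotIdeal I S →
      IsIdeal (quotMk I ⁻¹' S) ∧ I ⊆ quotMk I ⁻¹' S := by
    intro S hS
    refine ⟨⟨hS.1, ?_, ?_, ?_⟩, ?_⟩
    · intro a b hle hb
      refine hS.2.1 a b ?_ hb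
      rw [MValg.le] at hle
      rw [hle]
    · exact fun a b ha hb => hS.2.2.1 a b ha hb
    · exact fun a b ha => hS.2.2.2 a b ha
    · intro a haI
      show quotMk I a ∈ S
      rw [show quotMk I a = quotMk I MValg.zero from Quot.sound (relI_zero_iff.2 haI)]
      exact hS.1
  have key : ∀ J K : Set A, IsIdeal K → I ⊆ K →
      quotMk I '' J ⊆ quotMk I '' K → J ⊆ K := by
    intro J K hK hIK h j hj
    exact (mem_image_iff hI hK hIK).1 (h ⟨j, hj, rfl⟩)
  refine ⟨part1, part2, ⟨fun J hJ => part1 J hJ.1 hJ.2, ?_, ?_⟩, ?_⟩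
  · intro J hJ K hK heq
    simp only at heq
    exact Set.Subset.antisymm (key J K hK.1 hK.2 (le_of_eq heq))
      (key K J hJ.1 hJ.2 (le_of_eq heq.symm))
  · intro S hS
    refine ⟨quotMk I ⁻¹' S, ⟨(part2 S hS).1, (part2 S hS).2⟩, ?_⟩
    simp only
    ext x
    constructor
    · rintro ⟨a, ha, rfl⟩
      exact ha
    · intro hx
      induction x using Quot.ind with
      | _ a => exact ⟨a, hx, rfl⟩
  · intro J K hJ hIJ hK hIK
    exact ⟨fun h => Set.image_mono h, key J K hK hIK⟩
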